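/- arXiv:1806.04625 — 3 statements merged into one kernel-verified Lean document; each statement's English description precedes it below -/
import Mathlib

section
/- Let α > 0, C₀ > 0, C ∈ ℝ, and let β̂ : ℝ → [0, +∞] satisfy β̂(s) ≥ (2α + C₀) s² − C for every s ∈ ℝ. Then there exists ε₀ > 0 such that for every ε ∈ (0, ε₀] and every s ∈ ℝ one has β̂_ε(s) − C₀ s² ≥ α s² − C, where β̂_ε is the Moreau–Yosida regularization of β̂. -/
open scoped ENNReal

/-- The Moreau–Yosida regularization at level `ε` of an extended-real-valued
function `β : ℝ → [0, +∞]`. -/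
noncomputable def moreauYosida (β : ℝ → ℝ≥0∞) (ε : ℝ) (s : ℝ) : ℝ≥0∞ :=
  ⨅ τ : ℝ, ENNReal.ofReal ((τ - s) ^ 2 / (2 * ε)) + β τ

theorem stmt_11 (α C₀ C : ℝ) (hα : 0 < α) (hC₀ : 0 < C₀) (β : ℝ → ℝ≥0∞)
    (hβ : ∀ s : ℝ, ENNReal.ofReal ((2 * α + C₀) * s ^ 2 - C) ≤ β s) :
    ∃ ε₀ : ℝ, 0 < ε₀ ∧ ∀ ε ∈ Set.Ioc (0:ℝ) ε₀, ∀ s : ℝ,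
      ENNReal.ofReal ((α * s ^ 2 - C) + C₀ * s ^ 2) ≤ moreauYosida β ε s := by
  have hD : (0:ℝ) < 2 * (α + C₀) * (2 * α + C₀) := by positivity
  refine ⟨α / (2 * (α + C₀) * (2 * α + C₀)), by positivity, ?_⟩
  rintro ε ⟨hε, hε'⟩ s
  have hbound : ε * (2 * (α + C₀) * (2 * α + C₀)) ≤ α := (le_div_iff₀ hD).mp hε'
  rw [moreauYosida, le_iInf_iff]
  intro τ
  have h2ε : (0:ℝ) < 2 * ε := by linarith
  have hreal : (α * s ^ 2 - C) + C₀ * s ^ 2 ≤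
      (τ - s) ^ 2 / (2 * ε) + ((2 * α + C₀) * τ ^ 2 - C) := by
    have key : 2 * ε * ((α + C₀) * s ^ 2 - (2 * α + C₀) * τ ^ 2) ≤ (τ - s) ^ 2 := by
      rcases le_or_gt ((α + C₀) * s ^ 2) ((2 * α + C₀) * τ ^ 2) with h | h
      · nlinarith [sq_nonneg (τ - s)]
      · nlinarith [sq_nonneg ((2 * α + C₀) * τ - (α + C₀) * s), mul_pos hα hC₀,
          mul_nonneg (by linarith : (0:ℝ) ≤ α - ε * (2 * (α + C₀) * (2 * α + C₀))) (le_of_lt (sub_pos.mpr h))]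
    have := (le_div_iff₀ h2ε).mpr (by linarith : ((α + C₀) * s ^ 2 - (2 * α + C₀) * τ ^ 2) * (2*ε) ≤ (τ - s) ^ 2)
    linarith
  calc ENNReal.ofReal ((α * s ^ 2 - C) + C₀ * s ^ 2)
      ≤ ENNReal.ofReal ((τ - s) ^ 2 / (2 * ε) + ((2 * α + C₀) * τ ^ 2 - C)) :=
        ENNReal.ofReal_le_ofReal hreal
    _ ≤ ENNReal.ofReal ((τ - s) ^ 2 / (2 * ε)) + ENNReal.ofReal ((2 * α + C₀) * τ ^ 2 - C) :=
        ENNReal.ofReal_add_le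
    _ ≤ ENNReal.ofReal ((τ - s) ^ 2 / (2 * ε)) + β τ := add_le_add le_rfl (hβ τ)
end

section
/- (Ehrling-type compactness inequality) Let E, F, G be real normed vector spaces, let T : E → F be a compact continuous linear operator (T maps bounded sets of E to relatively compact sets of F), and let S : F → G be an injective continuous linear operator. Then for every δ > 0 there exists a constant C ≥ 0 such that ‖T x‖_F ≤ δ ‖x‖_E + C ‖S(T x)‖_G for every x ∈ E. -/
theorem stmt_13 {E F G : Type*} [NormedAddCommGroup E] [NormedSpace ℝ E]
    [NormedAddCommGroup F] [NormedSpace ℝ F] [NormedAddCommGroup G] [NormedSpace ℝ G]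
    (T : E →L[ℝ] F) (hT : IsCompactOperator T)
    (S : F →L[ℝ] G) (hS : Function.Injective S) :
    ∀ δ : ℝ, 0 < δ → ∃ C : ℝ, 0 ≤ C ∧ ∀ x : E, ‖T x‖ ≤ δ * ‖x‖ + C * ‖S (T x)‖ := by
  intro δ hδ
  by_contra h
  push_neg at h
  choose u hu using fun n : ℕ => h n (Nat.cast_nonneg n)
  have hTu : ∀ n, T (u n) ≠ 0 := by
    intro n h0
    have := hu n
    rw [h0] at this
    simp only [map_zero, norm_zero, mul_zero, add_zero] at this
    nlinarith [norm_nonneg (u n)]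
  set y : ℕ → E := fun n => ‖T (u n)‖⁻¹ • u n with hy
  have hTynorm : ∀ n, ‖T (y n)‖ = 1 := by
    intro n
    simp only [hy, map_smul, norm_smul, norm_inv, norm_norm]
    exact inv_mul_cancel₀ (norm_ne_zero_iff.mpr (hTu n))
  have hyineq : ∀ n, δ * ‖y n‖ + n * ‖S (T (y n))‖ < 1 := by
    intro n
    have hpos : 0 < ‖T (u n)‖ := norm_pos_iff.mpr (hTu n)
    have := hu n
    have h2 : δ * (‖T (u n)‖⁻¹ * ‖u n‖) + n * (‖T (u n)‖⁻¹ * ‖S (T (u n))‖)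
        < ‖T (u n)‖⁻¹ * ‖T (u n)‖ := by
      rw [inv_mul_cancel₀ hpos.ne']
      calc δ * (‖T (u n)‖⁻¹ * ‖u n‖) + n * (‖T (u n)‖⁻¹ * ‖S (T (u n))‖)
          = ‖T (u n)‖⁻¹ * (δ * ‖u n‖ + n * ‖S (T (u n))‖) := by ring
        _ < ‖T (u n)‖⁻¹ * ‖T (u n)‖ := by
            apply mul_lt_mul_of_pos_left this (inv_pos.mpr hpos)
        _ = 1 := inv_mul_cancel₀ hpos.ne'
    simpa [hy, map_smul, norm_smul, norm_inv, norm_norm, inv_mul_cancel₀ hpos.ne'] using h2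
  have hybdd : ∀ n, ‖y n‖ ≤ δ⁻¹ := by
    intro n
    have h1 := hyineq n
    have h2 : 0 ≤ (n : ℝ) * ‖S (T (y n))‖ :=
      mul_nonneg (Nat.cast_nonneg n) (norm_nonneg _)
    rw [show δ⁻¹ = δ⁻¹ * 1 by ring, le_inv_mul_iff₀ hδ]
    linarith
  have hSTy : Filter.Tendsto (fun n => ‖S (T (y n))‖) Filter.atTop (nhds 0) := by
    rw [Metric.tendsto_atTop]
    intro ε hε
    obtain ⟨N, hN⟩ := exists_nat_gt ε⁻¹
    refine ⟨N + 1, fun n hn => ?_⟩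
    have hn1 : (1 : ℝ) ≤ n := by exact_mod_cast Nat.one_le_iff_ne_zero.mpr (by omega)
    have hpos : (0 : ℝ) < n := by linarith
    have h1 := hyineq n
    have h2 : 0 ≤ δ * ‖y n‖ := mul_nonneg hδ.le (norm_nonneg _)
    have h3 : (n : ℝ) * ‖S (T (y n))‖ < 1 := by linarith
    have h4 : ‖S (T (y n))‖ < (n : ℝ)⁻¹ := by
      rw [show (n:ℝ)⁻¹ = (n:ℝ)⁻¹ * 1 by ring, lt_inv_mul_iff₀ hpos]
      linarith
    have h5 : (n : ℝ)⁻¹ < ε := by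
      have hNn : (N : ℝ) ≤ n := by exact_mod_cast Nat.le_of_succ_le hn
      have : ε⁻¹ < (n : ℝ) := lt_of_lt_of_le hN hNn
      calc (n : ℝ)⁻¹ < (ε⁻¹)⁻¹ := by
            apply inv_strictAnti₀ (inv_pos.mpr hε) this
        _ = ε := inv_inv ε
    rw [Real.dist_eq]
    rw [abs_of_nonneg (by linarith [norm_nonneg (S (T (y n)))] : (0:ℝ) ≤ ‖S (T (y n))‖ - 0)]
    simpa using lt_trans h4 h5
  -- compactness
  have hK : IsCompact (closure (T '' Metric.closedBall 0 δ⁻¹)) :=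
    hT.isCompact_closure_image_of_bounded (Metric.isBounded_closedBall)
  have hmem : ∀ n, T (y n) ∈ closure (T '' Metric.closedBall 0 δ⁻¹) := by
    intro n
    apply subset_closure
    exact ⟨y n, by simpa [Metric.mem_closedBall, dist_eq_norm] using hybdd n, rfl⟩
  obtain ⟨z, hz, φ, hφ, hconv⟩ := hK.isSeqCompact hmem
  have hznorm : ‖z‖ = 1 := by
    have : Filter.Tendsto (fun k => ‖T (y (φ k))‖) Filter.atTop (nhds ‖z‖) :=
      (continuous_norm.continuousAt.tendsto.comp hconv)
    have h1 : Filter.Tendsto (fun _ : ℕ => (1 : ℝ)) Filter.atTop (nhds ‖z‖) := by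
      simpa [hTynorm] using this
    exact tendsto_nhds_unique h1 tendsto_const_nhds
  have hSz : S z = 0 := by
    have h1 : Filter.Tendsto (fun k => S (T (y (φ k)))) Filter.atTop (nhds (S z)) :=
      (S.continuous.continuousAt.tendsto.comp hconv)
    have h2 : Filter.Tendsto (fun k => ‖S (T (y (φ k)))‖) Filter.atTop (nhds 0) :=
      hSTy.comp hφ.tendsto_atTop
    have h3 : Filter.Tendsto (fun k => S (T (y (φ k)))) Filter.atTop (nhds 0) := by
      rw [tendsto_zero_iff_norm_tendsto_zero]
      exact h2
    exact tendsto_nhds_unique h1 h3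
  have : z = 0 := hS (by simpa using hSz)
  rw [this, norm_zero] at hznorm
  norm_num at hznorm
end

section
/- Let (Ω, 𝒜, μ) be a measure space, let β̂ : ℝ → [0, +∞] be convex and lower semicontinuous with β̂(0) = 0, and let β̂_ε denote its Moreau–Yosida regularization. Let (ε_n) be a strictly decreasing sequence of positive reals with ε_n → 0, and let f_n, f : Ω → ℝ be measurable functions such that f_n → f μ-almost everywhere. Then ∫_Ω β̂(f(ω)) dμ(ω) ≤ liminf_n ∫_Ω β̂_{ε_n}(f_n(ω)) dμ(ω). -/
open MeasureTheory Filter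
open scoped ENNReal

lemma moreauYosida_usc (β : ℝ → ℝ≥0∞) (ε : ℝ) :
    UpperSemicontinuous (moreauYosida β ε) := by
  intro x b hb
  obtain ⟨τ, hτ⟩ : ∃ τ : ℝ, ENNReal.ofReal ((τ - x) ^ 2 / (2 * ε)) + β τ < b := by
    simpa [moreauYosida, iInf_lt_iff] using hb
  have hc : Continuous fun s : ℝ => ENNReal.ofReal ((τ - s) ^ 2 / (2 * ε)) + β τ := by
    exact ((ENNReal.continuous_ofReal.comp (by continuity)).add continuous_const)
  filter_upwards [hc.tendsto x (Iio_mem_nhds hτ)] with y hy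
  exact lt_of_le_of_lt (iInf_le _ τ) hy

lemma moreauYosida_measurable (β : ℝ → ℝ≥0∞) (ε : ℝ) :
    Measurable (moreauYosida β ε) :=
  (moreauYosida_usc β ε).measurable

lemma key (β : ℝ → ℝ≥0∞) (hlsc : LowerSemicontinuous β)
    {ε : ℕ → ℝ} (hεpos : ∀ n, 0 < ε n) (hεlim : Tendsto ε atTop (nhds 0))
    {s : ℝ} {sn : ℕ → ℝ} (hs : Tendsto sn atTop (nhds s)) :
    β s ≤ liminf (fun n => moreauYosida β (ε n) (sn n)) atTop := by
  refine le_of_forall_lt fun c hc => ?_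
  obtain ⟨b, hcb, hbs⟩ := exists_between hc
  have hbf : b ≠ ⊤ := hbs.ne_top
  refine lt_of_lt_of_le hcb (le_liminf_of_le (by isBoundedDefault) ?_)
  obtain ⟨δ, hδpos, hδ⟩ : ∃ δ > 0, ∀ τ : ℝ, |τ - s| < δ → b < β τ := by
    have := hlsc s b hbs
    rw [Metric.eventually_nhds_iff] at this
    obtain ⟨δ, hδpos, h⟩ := this
    exact ⟨δ, hδpos, fun τ hτ => h (by simpa [Real.dist_eq] using hτ)⟩
  have h1 : ∀ᶠ n in atTop, |sn n - s| < δ / 2 := by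
    have := Metric.tendsto_nhds.mp hs (δ / 2) (by positivity)
    simpa [Real.dist_eq] using this
  have h2 : ∀ᶠ n in atTop, ε n < δ ^ 2 / 4 / (2 * (b.toReal + 1)) := by
    have := Metric.tendsto_nhds.mp hεlim _ (show (0:ℝ) < δ ^ 2 / 4 / (2 * (b.toReal + 1)) by
      positivity)
    filter_upwards [this] with n hn
    calc ε n ≤ |ε n| := le_abs_self _
    _ < _ := by simpa [Real.dist_eq] using hn
  filter_upwards [h1, h2] with n hn1 hn2
  refine le_iInf fun τ => ?_
  by_cases hτ : |τ - s| < δ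
  · exact le_trans (hδ τ hτ).le (le_add_self)
  · push_neg at hτ
    have habs : δ / 2 ≤ |τ - sn n| := by
      have : |τ - s| ≤ |τ - sn n| + |sn n - s| := by
        have := abs_sub_le τ (sn n) s
        linarith [abs_sub_le τ (sn n) s]
      linarith
    have hq : b.toReal + 1 ≤ (τ - sn n) ^ 2 / (2 * ε n) := by
      have h4 : δ ^ 2 / 4 ≤ (τ - sn n) ^ 2 := by
        have := sq_le_sq' (by linarith [abs_nonneg (τ - sn n)] : -(|τ - sn n|) ≤ δ / 2) habs
        calc δ ^ 2 / 4 = (δ / 2) ^ 2 := by ring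
        _ ≤ |τ - sn n| ^ 2 := by nlinarith [abs_nonneg (τ - sn n)]
        _ = (τ - sn n) ^ 2 := sq_abs _
      have hε := hεpos n
      rw [le_div_iff₀ (by positivity)]
      have : (b.toReal + 1) * (2 * ε n) < (b.toReal + 1) * (2 * (δ ^ 2 / 4 / (2 * (b.toReal + 1)))) := by
        have hb1 : 0 < b.toReal + 1 := by positivity
        gcongr
      have : (b.toReal + 1) * (2 * (δ ^ 2 / 4 / (2 * (b.toReal + 1)))) = δ ^ 2 / 4 := by
        field_simp
      nlinarith [hεpos n]
    calc b ≤ ENNReal.ofReal (b.toReal + 1) := by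
            conv_lhs => rw [← ENNReal.ofReal_toReal hbf]
            exact ENNReal.ofReal_le_ofReal (by linarith)
    _ ≤ ENNReal.ofReal ((τ - sn n) ^ 2 / (2 * ε n)) := ENNReal.ofReal_le_ofReal hq
    _ ≤ _ := le_self_add

theorem stmt_15 {Ω : Type*} [MeasurableSpace Ω] (μ : Measure Ω)
    (β : ℝ → ℝ≥0∞)
    (hconv : ∀ a b t : ℝ, t ∈ Set.Icc (0:ℝ) 1 →
      β (t * a + (1 - t) * b) ≤ ENNReal.ofReal t * β a + ENNReal.ofReal (1 - t) * β b)
    (hlsc : LowerSemicontinuous β) (hβ0 : β 0 = 0)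
    (ε : ℕ → ℝ) (hεpos : ∀ n, 0 < ε n) (hεanti : StrictAnti ε)
    (hεlim : Tendsto ε atTop (nhds 0))
    (f : Ω → ℝ) (fn : ℕ → Ω → ℝ)
    (hf : Measurable f) (hfn : ∀ n, Measurable (fn n))
    (hae : ∀ᵐ ω ∂μ, Tendsto (fun n => fn n ω) atTop (nhds (f ω))) :
    (∫⁻ ω, β (f ω) ∂μ)
      ≤ liminf (fun n => ∫⁻ ω, moreauYosida β (ε n) (fn n ω) ∂μ) atTop := by
  calc (∫⁻ ω, β (f ω) ∂μ)
      ≤ ∫⁻ ω, liminf (fun n => moreauYosida β (ε n) (fn n ω)) atTop ∂μ := by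
        refine lintegral_mono_ae ?_
        filter_upwards [hae] with ω hω
        exact key β hlsc hεpos hεlim hω
    _ ≤ liminf (fun n => ∫⁻ ω, moreauYosida β (ε n) (fn n ω) ∂μ) atTop :=
        lintegral_liminf_le fun n => (moreauYosida_measurable β (ε n)).comp (hfn n)
end
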